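/- arXiv:2601.06513 — 6 statements merged into one kernel-verified Lean document; each statement's English description precedes it below -/
import Mathlib

section
/- Every symplectic matrix S ∈ Sp(2n,ℝ) admits a pre-Iwasawa decomposition S = [[I, 0],[X, I]]·[[Y^{-1/2}, 0],[0, Y^{1/2}]]·O, where X is real symmetric, Y is real symmetric positive definite, and O is an orthogonal symplectic matrix. -/
open Matrix

/-- The standard `2n × 2n` symplectic form `Ω = [[0, Iₙ], [-Iₙ, 0]]`. -/
def Omega (n : ℕ) : Matrix (Fin n ⊕ Fin n) (Fin n ⊕ Fin n) ℝ :=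
  Matrix.fromBlocks 0 1 (-1) 0

/-- Membership in the real symplectic group `Sp(2n,ℝ)`. -/
def IsSymplectic (n : ℕ) (S : Matrix (Fin n ⊕ Fin n) (Fin n ⊕ Fin n) ℝ) : Prop :=
  Sᵀ * Omega n * S = Omega n

lemma Omega_mul_self (n : ℕ) : Omega n * Omega n = -1 := by
  simp only [Omega, fromBlocks_multiply]
  rw [← fromBlocks_one, Matrix.fromBlocks_neg]
  simp

lemma Omega_isUnit (n : ℕ) : IsUnit (Omega n) := by
  apply IsUnit.of_mul_eq_one (-(Omega n))
  rw [Matrix.mul_neg, Omega_mul_self, neg_neg]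

lemma symplectic_det_isUnit {n : ℕ} {S : Matrix (Fin n ⊕ Fin n) (Fin n ⊕ Fin n) ℝ}
    (hS : IsSymplectic n S) : IsUnit S.det := by
  have h := congrArg Matrix.det hS
  rw [det_mul, det_mul, det_transpose] at h
  have hΩ : (Omega n).det ≠ 0 := by
    have := (Matrix.isUnit_iff_isUnit_det _).mp (Omega_isUnit n)
    exact this.ne_zero
  have h2 : S.det * S.det = 1 := by
    have : (S.det * S.det - 1) * (Omega n).det = 0 := by ring_nf; nlinarith [h]
    rcases mul_eq_zero.mp this with h' | h'
    · linarith [sub_eq_zero.mp h']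
    · exact absurd h' hΩ
  exact IsUnit.of_mul_eq_one _ h2

lemma symplectic_mul {n : ℕ} {A B : Matrix (Fin n ⊕ Fin n) (Fin n ⊕ Fin n) ℝ}
    (hA : IsSymplectic n A) (hB : IsSymplectic n B) : IsSymplectic n (A * B) := by
  unfold IsSymplectic at *
  rw [transpose_mul,
    show Bᵀ * Aᵀ * Omega n * (A * B) = Bᵀ * ((Aᵀ * Omega n * A) * B) from by
      simp only [Matrix.mul_assoc], hA, ← Matrix.mul_assoc]
  exact hB

lemma symplectic_inv {n : ℕ} {A : Matrix (Fin n ⊕ Fin n) (Fin n ⊕ Fin n) ℝ}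
    (hA : IsSymplectic n A) : IsSymplectic n A⁻¹ := by
  have hu : IsUnit A.det := symplectic_det_isUnit hA
  have htu : IsUnit Aᵀ.det := by rwa [Matrix.det_transpose]
  have h1 : A * A⁻¹ = 1 := Matrix.mul_nonsing_inv _ hu
  unfold IsSymplectic at *
  rw [Matrix.transpose_nonsing_inv]
  conv_lhs => rw [← hA]
  simp only [Matrix.mul_assoc]
  rw [h1, Matrix.mul_one, ← Matrix.mul_assoc, Matrix.nonsing_inv_mul _ htu, Matrix.one_mul]

lemma Omega_inv (n : ℕ) : (Omega n)⁻¹ = -(Omega n) :=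
  Matrix.inv_eq_right_inv (by rw [Matrix.mul_neg, Omega_mul_self, neg_neg])

lemma symplectic_transpose {n : ℕ} {A : Matrix (Fin n ⊕ Fin n) (Fin n ⊕ Fin n) ℝ}
    (hA : IsSymplectic n A) : A * Omega n * Aᵀ = Omega n := by
  have hi := symplectic_inv hA
  unfold IsSymplectic at hi
  rw [Matrix.transpose_nonsing_inv] at hi
  have hu : IsUnit A.det := symplectic_det_isUnit hA
  have htu : IsUnit Aᵀ.det := by rwa [Matrix.det_transpose]
  have h := congrArg Inv.inv hi
  rw [Matrix.mul_inv_rev, Matrix.mul_inv_rev, Matrix.nonsing_inv_nonsing_inv _ hu,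
    Matrix.nonsing_inv_nonsing_inv _ htu, Omega_inv, Matrix.neg_mul, Matrix.mul_neg,
    neg_inj] at h
  rw [Matrix.mul_assoc]
  exact h

lemma posDef_of_sq {m : Type*} [Fintype m] [DecidableEq m] {R Y : Matrix m m ℝ}
    (hR : R.PosSemidef) (hRR : R * R = Y) (hY : Y.PosDef) : R.PosDef := by
  refine Matrix.PosDef.of_dotProduct_mulVec_pos hR.1 (fun x hx => ?_)
  rcases lt_or_eq_of_le (hR.dotProduct_mulVec_nonneg x) with h | h
  · exact h
  · exfalso
    have h0 : R *ᵥ x = 0 := (hR.dotProduct_mulVec_zero_iff x).mp h.symm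
    have hy0 : Y *ᵥ x = 0 := by
      rw [← hRR, ← Matrix.mulVec_mulVec, h0, Matrix.mulVec_zero]
    have := hY.dotProduct_mulVec_pos hx
    rw [hy0] at this
    simp at this

/-- Pre-Iwasawa decomposition: every symplectic `S` can be written as
`S = [[I,0],[X,I]] · [[Y^{-1/2},0],[0,Y^{1/2}]] · O` with `X` symmetric,
`Y` symmetric positive definite (with positive definite square root `R`, `R·R = Y`),
and `O` orthogonal symplectic. -/
theorem stmt5 (n : ℕ) (S : Matrix (Fin n ⊕ Fin n) (Fin n ⊕ Fin n) ℝ)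
    (hS : IsSymplectic n S) :
    ∃ (X Y R : Matrix (Fin n) (Fin n) ℝ)
      (O : Matrix (Fin n ⊕ Fin n) (Fin n ⊕ Fin n) ℝ),
      X.IsSymm ∧ Y.PosDef ∧ R.PosDef ∧ R * R = Y ∧
      IsSymplectic n O ∧ Oᵀ * O = 1 ∧
      S = Matrix.fromBlocks 1 0 X 1 * Matrix.fromBlocks R⁻¹ 0 0 R * O := by
  classical
  have hu : IsUnit S.det := symplectic_det_isUnit hS
  have htu : IsUnit Sᵀ.det := by rwa [Matrix.det_transpose]
  set P := S * Sᵀ with hPdef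
  have hPH : P.IsHermitian := by
    have := Matrix.isHermitian_mul_conjTranspose_self S
    simpa [Matrix.conjTranspose_eq_transpose_of_trivial] using this
  have hPsd : P.PosSemidef := by
    have := Matrix.posSemidef_self_mul_conjTranspose S
    simpa [Matrix.conjTranspose_eq_transpose_of_trivial] using this
  have hPunit : IsUnit P.det := by rw [hPdef, det_mul]; exact hu.mul htu
  have hPpd : P.PosDef := by
    refine Matrix.PosDef.of_dotProduct_mulVec_pos hPH (fun x hx => ?_)
    rcases lt_or_eq_of_le (hPsd.dotProduct_mulVec_nonneg x) with h | h
    · exact h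
    · exfalso
      have h0 : P *ᵥ x = 0 := (hPsd.dotProduct_mulVec_zero_iff x).mp h.symm
      apply hx
      have hinj := Matrix.mulVec_injective_iff_isUnit.mpr
        ((Matrix.isUnit_iff_isUnit_det _).mpr hPunit)
      have : P *ᵥ x = P *ᵥ 0 := by simpa [Matrix.mulVec_zero] using h0
      exact hinj this
  have hPsymmE : Pᵀ = P := by
    rw [← Matrix.conjTranspose_eq_transpose_of_trivial]; exact hPH
  set W := P.toBlocks₁₁ with hWdef
  set K := P.toBlocks₂₁ with hKdef
  set V := P.toBlocks₂₂ with hVdef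
  have h12 : P.toBlocks₁₂ = Kᵀ := by
    ext i j
    have := congrFun (congrFun hPsymmE (Sum.inl i)) (Sum.inr j)
    simp only [Matrix.transpose_apply] at this
    simp only [Matrix.toBlocks₁₂, Matrix.toBlocks₂₁, Matrix.transpose_apply, Matrix.of_apply]
    exact this.symm
  have hPb : P = fromBlocks W Kᵀ K V := by
    rw [← h12]
    exact (P.fromBlocks_toBlocks).symm
  -- W is positive definite
  have hWpd : W.PosDef := by
    refine Matrix.PosDef.of_dotProduct_mulVec_pos ?_ ?_
    · exact hPH.submatrix Sum.inl
    · intro x hx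
      have hy : (Sum.elim x 0 : Fin n ⊕ Fin n → ℝ) ≠ 0 := by
        intro h; apply hx; ext i; exact congrFun h (Sum.inl i)
      have hp := hPpd.dotProduct_mulVec_pos hy
      rw [hPb, fromBlocks_mulVec] at hp
      simpa [Matrix.mulVec_zero, sumElim_dotProduct_sumElim] using hp
  have hWunit : IsUnit W.det := (Matrix.isUnit_iff_isUnit_det _).mp hWpd.isUnit
  have hYpd : W⁻¹.PosDef := hWpd.inv
  open scoped MatrixOrder in set R := CFC.sqrt W⁻¹ with hRdef
  have hRsd : R.PosSemidef := by open scoped MatrixOrder in exact (CFC.sqrt_nonneg _).posSemidef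
  have hRR : R * R = W⁻¹ := by open scoped MatrixOrder in exact CFC.sqrt_mul_sqrt_self _ hYpd.posSemidef.nonneg
  have hRpd : R.PosDef := posDef_of_sq hRsd hRR hYpd
  have hRunit : IsUnit R.det := (Matrix.isUnit_iff_isUnit_det _).mp hRpd.isUnit
  have hWsymm : Wᵀ = W := by
    rw [← Matrix.conjTranspose_eq_transpose_of_trivial]; exact hWpd.1
  have hRsymm : Rᵀ = R := by
    rw [← Matrix.conjTranspose_eq_transpose_of_trivial]; exact hRpd.1
  have hRisymm : (R⁻¹)ᵀ = R⁻¹ := by rw [Matrix.transpose_nonsing_inv, hRsymm]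
  have hWWi : W * W⁻¹ = 1 := Matrix.mul_nonsing_inv _ hWunit
  have hWiW : W⁻¹ * W = 1 := Matrix.nonsing_inv_mul _ hWunit
  have hRRi : R * R⁻¹ = 1 := Matrix.mul_nonsing_inv _ hRunit
  have hRiR : R⁻¹ * R = 1 := Matrix.nonsing_inv_mul _ hRunit
  have hRiRi : R⁻¹ * R⁻¹ = W := by
    have h1 : (R * R)⁻¹ = W := by rw [hRR, Matrix.nonsing_inv_nonsing_inv _ hWunit]
    rw [← h1, Matrix.mul_inv_rev]
  -- block equations from P Ω P = Ω
  have hPP : P * Omega n * P = Omega n := by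
    calc P * Omega n * P = S * ((Sᵀ * Omega n * S) * Sᵀ) := by
          simp only [hPdef, Matrix.mul_assoc]
      _ = S * (Omega n * Sᵀ) := by rw [hS]
      _ = Omega n := by rw [← Matrix.mul_assoc]; exact symplectic_transpose hS
  have hblocks := hPP
  rw [hPb, show Omega n = fromBlocks 0 1 (-1) 0 from rfl, fromBlocks_multiply,
    fromBlocks_multiply] at hblocks
  simp only [Matrix.mul_zero, Matrix.zero_mul, Matrix.mul_one, Matrix.one_mul,
    Matrix.mul_neg, Matrix.neg_mul, add_zero, zero_add, neg_zero] at hblocks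
  obtain ⟨e11, -, e21, -⟩ := fromBlocks_inj.mp hblocks
  have hWK : W * K = Kᵀ * W := by
    have h := e11
    rw [neg_add_eq_zero] at h
    exact h.symm
  have hVW : V * W = K * K + 1 := by
    have h2 : K * K - V * W = -1 := by rw [sub_eq_neg_add]; exact e21
    have h3 := sub_eq_iff_eq_add.mp h2
    rw [h3]; abel
  set X := K * W⁻¹ with hXdef
  have hXsymm : X.IsSymm := by
    unfold Matrix.IsSymm
    rw [hXdef, Matrix.transpose_mul, Matrix.transpose_nonsing_inv, hWsymm]
    calc W⁻¹ * Kᵀ = W⁻¹ * Kᵀ * (W * W⁻¹) := by rw [hWWi, Matrix.mul_one]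
      _ = W⁻¹ * (Kᵀ * W) * W⁻¹ := by simp only [Matrix.mul_assoc]
      _ = W⁻¹ * (W * K) * W⁻¹ := by rw [hWK]
      _ = K * W⁻¹ := by rw [← Matrix.mul_assoc, hWiW, Matrix.one_mul]
  have hXsymmE : Xᵀ = X := hXsymm
  have hWX : W * X = Kᵀ := by
    rw [hXdef, ← Matrix.mul_assoc, hWK, Matrix.mul_assoc, hWWi, Matrix.mul_one]
  have hXW : X * W = K := by
    rw [hXdef, Matrix.mul_assoc, hWiW, Matrix.mul_one]
  set L := fromBlocks R⁻¹ 0 (X * R⁻¹) R with hLdef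
  have hLt : Lᵀ = fromBlocks R⁻¹ (R⁻¹ * X) 0 R := by
    rw [hLdef, fromBlocks_transpose, Matrix.transpose_zero, hRisymm, hRsymm,
      Matrix.transpose_mul, hRisymm, hXsymmE]
  have hLLt : L * Lᵀ = P := by
    rw [hLt, hLdef, fromBlocks_multiply, hPb]
    refine fromBlocks_inj.mpr ⟨?_, ?_, ?_, ?_⟩
    · simp [hRiRi]
    · rw [← Matrix.mul_assoc, hRiRi]; simp [hWX]
    · rw [Matrix.mul_assoc, hRiRi]; simp [hXW]
    · have h1 : X * R⁻¹ * (R⁻¹ * X) = K * K * W⁻¹ := by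
        calc X * R⁻¹ * (R⁻¹ * X) = X * (R⁻¹ * R⁻¹) * X := by simp only [Matrix.mul_assoc]
          _ = X * W * X := by rw [hRiRi]
          _ = K * X := by rw [hXW]
          _ = K * K * W⁻¹ := by rw [hXdef, Matrix.mul_assoc]
      rw [h1, hRR]
      calc K * K * W⁻¹ + W⁻¹ = (K * K + 1) * W⁻¹ := by rw [Matrix.add_mul, Matrix.one_mul]
        _ = V * W * W⁻¹ := by rw [hVW]
        _ = V := by rw [Matrix.mul_assoc, hWWi, Matrix.mul_one]
  have hLsym : IsSymplectic n L := by
    unfold IsSymplectic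
    rw [hLt, hLdef, show Omega n = fromBlocks 0 1 (-1) 0 from rfl, fromBlocks_multiply,
      fromBlocks_multiply]
    refine fromBlocks_inj.mpr ⟨?_, ?_, ?_, ?_⟩
    · simp only [Matrix.mul_zero, Matrix.zero_mul, Matrix.mul_one, Matrix.one_mul,
        Matrix.mul_neg, Matrix.neg_mul, add_zero, zero_add, neg_zero]
      simp [Matrix.neg_mul, Matrix.mul_assoc]
    · simp [hRiR]
    · simp [hRRi]
    · simp
  have hLdetU : IsUnit L.det := by
    rw [hLdef, Matrix.det_fromBlocks_zero₁₂]
    exact (Matrix.isUnit_nonsing_inv_det _ hRunit).mul hRunit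
  refine ⟨X, W⁻¹, R, L⁻¹ * S, hXsymm, hYpd, hRpd, hRR,
    symplectic_mul (symplectic_inv hLsym) hS, ?_, ?_⟩
  · have hinv : (L⁻¹)ᵀ * L⁻¹ = P⁻¹ := by
      rw [Matrix.transpose_nonsing_inv, ← Matrix.mul_inv_rev, hLLt]
    calc (L⁻¹ * S)ᵀ * (L⁻¹ * S) = Sᵀ * (((L⁻¹)ᵀ * L⁻¹) * S) := by
          rw [Matrix.transpose_mul]; simp only [Matrix.mul_assoc]
      _ = Sᵀ * ((Sᵀ)⁻¹ * (S⁻¹ * S)) := by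
          rw [hinv, hPdef, Matrix.mul_inv_rev]; simp only [Matrix.mul_assoc]
      _ = 1 := by rw [Matrix.nonsing_inv_mul _ hu, Matrix.mul_one, Matrix.mul_nonsing_inv _ htu]
  · have hL1 : fromBlocks 1 0 X 1 * fromBlocks R⁻¹ 0 0 R = L := by
      rw [fromBlocks_multiply, hLdef]
      refine fromBlocks_inj.mpr ⟨?_, ?_, ?_, ?_⟩ <;> simp
    rw [hL1, ← Matrix.mul_assoc, Matrix.mul_nonsing_inv _ hLdetU, Matrix.one_mul]
end

section
/- Let X, Y, dX, dY be real symmetric n×n matrices with Y positive definite, and let V = [[Y^{-1}, Y^{-1}X],[XY^{-1}, Y+XY^{-1}X]] and dV the corresponding differential (obtained by replacing X by X+t·dX, Y by Y+t·dY and taking the derivative at t=0). Then Tr[(V^{-1} dV)²] = 2·Tr[(Y^{-1} dX)²] + 2·Tr[(Y^{-1} dY)²]. -/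
open Matrix

private lemma trace_fromBlocks' {n : ℕ} (A B C D : Matrix (Fin n) (Fin n) ℝ) :
    trace (Matrix.fromBlocks A B C D) = trace A + trace D := by
  simp [Matrix.trace, Matrix.diag, Fintype.sum_sum_type, Matrix.fromBlocks_apply₁₁,
    Matrix.fromBlocks_apply₂₂]

private lemma key_trace (n : ℕ) (P X dX dY : Matrix (Fin n) (Fin n) ℝ) :
    trace ((-(dY*P) - X*P*dX*P) * (-(dY*P) - X*P*dX*P)
        + (-(dY*P*X) + dX - X*P*dY - X*P*dX*P*X) * (P*dX*P))
    + trace ((P*dX*P) * (-(dY*P*X) + dX - X*P*dY - X*P*dX*P*X)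
        + (P*dY + P*dX*P*X) * (P*dY + P*dX*P*X))
    = 2*trace ((P*dX)^2) + 2*trace ((P*dY)^2) := by
  have a1 : trace (dY*(P*(dY*P))) = trace (P*(dY*(P*dY))) := by
    simpa [Matrix.mul_assoc] using trace_mul_comm dY (P*(dY*P))
  have a2 : trace (X*(P*(dX*(P*(dY*P))))) = trace (P*(dX*(P*(dY*(P*X))))) := by
    simpa [Matrix.mul_assoc] using trace_mul_comm X (P*(dX*(P*(dY*P))))
  have a3 : trace (dX*(P*(dX*P))) = trace (P*(dX*(P*dX))) := by
    simpa [Matrix.mul_assoc] using trace_mul_comm dX (P*(dX*P))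
  have a4 : trace (X*(P*(dY*(P*(dX*P))))) = trace (P*(dY*(P*(dX*(P*X))))) := by
    simpa [Matrix.mul_assoc] using trace_mul_comm X (P*(dY*(P*(dX*P))))
  simp only [pow_two, mul_add, add_mul, mul_sub, sub_mul, mul_neg, neg_mul, neg_neg,
    trace_add, trace_sub, trace_neg, Matrix.mul_assoc]
  linear_combination a1 + a2 + a3 - a4

/-- With `V = [[Y⁻¹, Y⁻¹X],[XY⁻¹, Y+XY⁻¹X]]` and `dV` its differential in the
direction `(dX, dY)` (blockwise Fréchet derivative), one has
`Tr[(V⁻¹ dV)²] = 2 Tr[(Y⁻¹dX)²] + 2 Tr[(Y⁻¹dY)²]`. -/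
theorem stmt7 (n : ℕ) (X Y dX dY : Matrix (Fin n) (Fin n) ℝ)
    (hX : X.IsSymm) (hY : Y.PosDef) (hdX : dX.IsSymm) (hdY : dY.IsSymm) :
    let V : Matrix (Fin n ⊕ Fin n) (Fin n ⊕ Fin n) ℝ :=
      Matrix.fromBlocks Y⁻¹ (Y⁻¹ * X) (X * Y⁻¹) (Y + X * Y⁻¹ * X)
    let dV : Matrix (Fin n ⊕ Fin n) (Fin n ⊕ Fin n) ℝ :=
      Matrix.fromBlocks
        (-(Y⁻¹ * dY * Y⁻¹))
        (-(Y⁻¹ * dY * Y⁻¹ * X) + Y⁻¹ * dX)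
        (dX * Y⁻¹ - X * Y⁻¹ * dY * Y⁻¹)
        (dY + dX * Y⁻¹ * X - X * Y⁻¹ * dY * Y⁻¹ * X + X * Y⁻¹ * dX)
    Matrix.trace ((V⁻¹ * dV) ^ 2) =
      2 * Matrix.trace ((Y⁻¹ * dX) ^ 2) + 2 * Matrix.trace ((Y⁻¹ * dY) ^ 2) := by
  intro V dV
  have hu : IsUnit Y.det := isUnit_iff_ne_zero.mpr (ne_of_gt hY.det_pos)
  haveI := Y.invertibleOfIsUnitDet hu
  have hW : V⁻¹ = Matrix.fromBlocks (Y + X * Y⁻¹ * X) (-(X * Y⁻¹)) (-(Y⁻¹ * X)) Y⁻¹ := by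
    apply inv_eq_right_inv
    show Matrix.fromBlocks Y⁻¹ (Y⁻¹ * X) (X * Y⁻¹) (Y + X * Y⁻¹ * X) * _ = 1
    rw [fromBlocks_multiply]
    have ha : Y⁻¹ * (Y + X * Y⁻¹ * X) + Y⁻¹ * X * -(Y⁻¹ * X) = 1 := by
      simp [mul_add, mul_assoc, inv_mul_cancel_left_of_invertible,
        Matrix.inv_mul_of_invertible]
    have hb : Y⁻¹ * -(X * Y⁻¹) + Y⁻¹ * X * Y⁻¹ = 0 := by
      simp [mul_assoc]
    have hc : X * Y⁻¹ * (Y + X * Y⁻¹ * X) + (Y + X * Y⁻¹ * X) * -(Y⁻¹ * X) = 0 := by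
      simp [mul_add, add_mul, mul_assoc, inv_mul_cancel_left_of_invertible,
        mul_inv_cancel_left_of_invertible, nonsing_inv_mul_cancel_right]
    have hd : X * Y⁻¹ * -(X * Y⁻¹) + (Y + X * Y⁻¹ * X) * Y⁻¹ = 1 := by
      simp [mul_add, add_mul, mul_assoc, Matrix.mul_inv_of_invertible]
    rw [ha, hb, hc, hd, fromBlocks_one]
  have hM : V⁻¹ * dV = Matrix.fromBlocks
      (-(dY*Y⁻¹) - X*Y⁻¹*dX*Y⁻¹)
      (-(dY*Y⁻¹*X) + dX - X*Y⁻¹*dY - X*Y⁻¹*dX*Y⁻¹*X)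
      (Y⁻¹*dX*Y⁻¹)
      (Y⁻¹*dY + Y⁻¹*dX*Y⁻¹*X) := by
    rw [hW]
    show _ * Matrix.fromBlocks (-(Y⁻¹ * dY * Y⁻¹)) (-(Y⁻¹ * dY * Y⁻¹ * X) + Y⁻¹ * dX)
        (dX * Y⁻¹ - X * Y⁻¹ * dY * Y⁻¹)
        (dY + dX * Y⁻¹ * X - X * Y⁻¹ * dY * Y⁻¹ * X + X * Y⁻¹ * dX) = _
    rw [fromBlocks_multiply]
    have ha : (Y + X * Y⁻¹ * X) * -(Y⁻¹ * dY * Y⁻¹)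
        + -(X * Y⁻¹) * (dX * Y⁻¹ - X * Y⁻¹ * dY * Y⁻¹)
        = -(dY*Y⁻¹) - X*Y⁻¹*dX*Y⁻¹ := by
      simp only [mul_add, add_mul, mul_sub, sub_mul, mul_neg, neg_mul, neg_neg,
        mul_assoc, mul_inv_cancel_left_of_invertible, inv_mul_cancel_left_of_invertible]
      abel
    have hb : (Y + X * Y⁻¹ * X) * (-(Y⁻¹ * dY * Y⁻¹ * X) + Y⁻¹ * dX)
        + -(X * Y⁻¹) * (dY + dX * Y⁻¹ * X - X * Y⁻¹ * dY * Y⁻¹ * X + X * Y⁻¹ * dX)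
        = -(dY*Y⁻¹*X) + dX - X*Y⁻¹*dY - X*Y⁻¹*dX*Y⁻¹*X := by
      simp only [mul_add, add_mul, mul_sub, sub_mul, mul_neg, neg_mul, neg_neg,
        mul_assoc, mul_inv_cancel_left_of_invertible, inv_mul_cancel_left_of_invertible]
      abel
    have hc : -(Y⁻¹ * X) * -(Y⁻¹ * dY * Y⁻¹)
        + Y⁻¹ * (dX * Y⁻¹ - X * Y⁻¹ * dY * Y⁻¹) = Y⁻¹*dX*Y⁻¹ := by
      simp only [mul_add, add_mul, mul_sub, sub_mul, mul_neg, neg_mul, neg_neg,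
        mul_assoc, mul_inv_cancel_left_of_invertible, inv_mul_cancel_left_of_invertible]
      abel
    have hd : -(Y⁻¹ * X) * (-(Y⁻¹ * dY * Y⁻¹ * X) + Y⁻¹ * dX)
        + Y⁻¹ * (dY + dX * Y⁻¹ * X - X * Y⁻¹ * dY * Y⁻¹ * X + X * Y⁻¹ * dX)
        = Y⁻¹*dY + Y⁻¹*dX*Y⁻¹*X := by
      simp only [mul_add, add_mul, mul_sub, sub_mul, mul_neg, neg_mul, neg_neg,
        mul_assoc, mul_inv_cancel_left_of_invertible, inv_mul_cancel_left_of_invertible]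
      abel
    rw [ha, hb, hc, hd]
  rw [hM, pow_two, fromBlocks_multiply, trace_fromBlocks']
  exact key_trace n Y⁻¹ X dX dY
end

section
/- The group Sp(2n,ℝ) acts on the Siegel upper half-space 𝔥_n by generalized Möbius transformations: if T = [[A,B],[C,D]] ∈ Sp(2n,ℝ) and Z ∈ 𝔥_n, then A + BZ is invertible and Z' = (C + DZ)(A + BZ)^{-1} again lies in 𝔥_n (i.e., Z' is complex symmetric with positive definite imaginary part). -/
/-!
Write `M = A + BZ` and `N = C + DZ`. The symplectic relations give, for all `W, W'`,
`(A + BW)ᵀ(C + DW') - (C + DW)ᵀ(A + BW') = W' - Wᵀ`.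
With `W = W' = Z` this says `MᵀN = NᵀM`, so `NM⁻¹` is symmetric once `M` is invertible.
With `W = Z̄`, `W' = Z` it says `MᴴN - NᴴM = Z - Z̄ = 2i · Im Z`: if `Mv = 0` the Hermitian form
of the left side vanishes at `v`, contradicting `Im Z > 0`, and conjugating by `M⁻¹` turns it into
`Im (NM⁻¹) = (M⁻¹)ᴴ (Im Z) M⁻¹ > 0`.
-/

open Matrix
open scoped ComplexOrder

def InSiegel (n : ℕ) (Z : Matrix (Fin n) (Fin n) ℂ) : Prop :=
  Z.IsSymm ∧ (Z.map Complex.im).PosDef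

namespace Matrix

section Symplectic

variable {ι R : Type*} [Fintype ι] [DecidableEq ι]

structure IsSymplecticBlocks [CommRing R] (A B C D : Matrix ι ι R) : Prop where
  transpose_mul_left : Aᵀ * C = Cᵀ * A
  transpose_mul_right : Bᵀ * D = Dᵀ * B
  transpose_mul_sub_eq_one : Aᵀ * D - Cᵀ * B = 1

theorem fromBlocks_transpose_mul_Omega_mul_fromBlocks {n : ℕ}
    (A B C D : Matrix (Fin n) (Fin n) ℝ) :
    (fromBlocks A B C D)ᵀ * Omega n * fromBlocks A B C D =
      fromBlocks (Aᵀ * C - Cᵀ * A) (Aᵀ * D - Cᵀ * B) (Bᵀ * C - Dᵀ * A) (Bᵀ * D - Dᵀ * B) := by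
  simp only [Omega, fromBlocks_transpose, fromBlocks_multiply]
  congr 1 <;> noncomm_ring

theorem isSymplecticBlocks_of_transpose_mul_Omega_mul {n : ℕ}
    {A B C D : Matrix (Fin n) (Fin n) ℝ}
    (hT : (fromBlocks A B C D)ᵀ * Omega n * fromBlocks A B C D = Omega n) :
    IsSymplecticBlocks A B C D := by
  rw [fromBlocks_transpose_mul_Omega_mul_fromBlocks, Omega, fromBlocks_inj] at hT
  obtain ⟨hAC, hAD, -, hBD⟩ := hT
  exact ⟨sub_eq_zero.mp hAC, sub_eq_zero.mp hBD, hAD⟩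

namespace IsSymplecticBlocks

variable [CommRing R] {A B C D : Matrix ι ι R}

theorem map {S : Type*} [CommRing S] (h : IsSymplecticBlocks A B C D) (f : R →+* S) :
    IsSymplecticBlocks (A.map f) (B.map f) (C.map f) (D.map f) := by
  have hf (P Q : Matrix ι ι R) : (P.map f)ᵀ * Q.map f = (Pᵀ * Q).map f := by
    rw [Matrix.map_mul, transpose_map]
  refine ⟨?_, ?_, ?_⟩
  · rw [hf, hf, h.transpose_mul_left]
  · rw [hf, hf, h.transpose_mul_right]
  · rw [hf, hf, ← Matrix.map_sub _ (map_sub f), h.transpose_mul_sub_eq_one,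
      Matrix.map_one _ f.map_zero f.map_one]

theorem transpose_mul_sub_eq_neg_one (h : IsSymplecticBlocks A B C D) : Bᵀ * C - Dᵀ * A = -1 := by
  have := congrArg transpose h.transpose_mul_sub_eq_one
  simp only [transpose_sub, transpose_mul, transpose_transpose, transpose_one] at this
  rw [← this]
  abel

theorem moebius_transpose_mul_sub (h : IsSymplecticBlocks A B C D) (W W' : Matrix ι ι R) :
    (A + B * W)ᵀ * (C + D * W') - (C + D * W)ᵀ * (A + B * W') = W' - Wᵀ := by
  have expand : (A + B * W)ᵀ * (C + D * W') - (C + D * W)ᵀ * (A + B * W')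
      = (Aᵀ * C - Cᵀ * A) + (Aᵀ * D - Cᵀ * B) * W' + Wᵀ * (Bᵀ * C - Dᵀ * A)
        + Wᵀ * ((Bᵀ * D - Dᵀ * B) * W') := by
    simp only [transpose_add, transpose_mul]
    noncomm_ring
  rw [expand, h.transpose_mul_sub_eq_one, h.transpose_mul_sub_eq_neg_one, h.transpose_mul_left,
    h.transpose_mul_right]
  noncomm_ring

end IsSymplecticBlocks

end Symplectic

section Complexification

theorem conjTranspose_map_ofReal {m n : Type*} (P : Matrix m n ℝ) :
    (P.map (fun x => (x : ℂ)))ᴴ = (P.map (fun x => (x : ℂ)))ᵀ := by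
  ext i j
  simp

theorem sub_conjTranspose_of_isSymm {n : Type*} {Z : Matrix n n ℂ} (hZ : Z.IsSymm) :
    Z - Zᴴ = (2 * Complex.I) • (Z.map Complex.im).map (fun x => (x : ℂ)) := by
  ext i j
  rw [sub_apply, conjTranspose_apply, hZ.apply i j, Complex.star_def, Complex.sub_conj]
  simp only [smul_apply, map_apply, smul_eq_mul]
  push_cast
  ring

theorem isHermitian_map_ofReal_iff {n : Type*} {P : Matrix n n ℝ} :
    (P.map (fun x => (x : ℂ))).IsHermitian ↔ P.IsHermitian := by
  rw [IsHermitian, IsHermitian, conjTranspose_map_ofReal, ← transpose_map,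
    conjTranspose_eq_transpose_of_trivial]
  exact (map_injective Complex.ofReal_injective).eq_iff

variable {ι : Type*} [Fintype ι]

theorem conjTranspose_map_ofReal_add_mul (A B : Matrix ι ι ℝ) (Z : Matrix ι ι ℂ) :
    (A.map (fun x => (x : ℂ)) + B.map (fun x => (x : ℂ)) * Z)ᴴ =
      (A.map (fun x => (x : ℂ)) + B.map (fun x => (x : ℂ)) * Zᴴᵀ)ᵀ := by
  rw [conjTranspose_add, conjTranspose_mul, conjTranspose_map_ofReal, conjTranspose_map_ofReal,
    transpose_add, transpose_mul, transpose_transpose]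

theorem re_star_dotProduct_map_ofReal_mulVec (P : Matrix ι ι ℝ) (v : ι → ℂ) :
    (star v ⬝ᵥ (P.map (fun x => (x : ℂ)) *ᵥ v)).re =
      (fun i => (v i).re) ⬝ᵥ P *ᵥ (fun i => (v i).re) +
        (fun i => (v i).im) ⬝ᵥ P *ᵥ (fun i => (v i).im) := by
  simp only [dotProduct, mulVec, Pi.star_apply, map_apply, Complex.re_sum, Finset.mul_sum,
    ← Finset.sum_add_distrib]
  refine Finset.sum_congr rfl fun i _ => Finset.sum_congr rfl fun j _ => ?_
  simp only [Complex.mul_re, Complex.mul_im, Complex.star_def, Complex.conj_re, Complex.conj_im,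
    Complex.ofReal_re, Complex.ofReal_im]
  ring

theorem star_dotProduct_map_ofReal_mulVec_map_ofReal (P : Matrix ι ι ℝ) (x : ι → ℝ) :
    star (fun i => (x i : ℂ)) ⬝ᵥ (P.map (fun x => (x : ℂ)) *ᵥ fun i => (x i : ℂ)) =
      ((x ⬝ᵥ P *ᵥ x : ℝ) : ℂ) := by
  simp [dotProduct, mulVec]

theorem posDef_map_ofReal_iff {P : Matrix ι ι ℝ} :
    (P.map (fun x => (x : ℂ))).PosDef ↔ P.PosDef := by
  simp only [posDef_iff_dotProduct_mulVec, isHermitian_map_ofReal_iff, star_trivial,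
    and_congr_right_iff]
  intro hP
  constructor
  · intro hpos x hx
    have hxc : (fun i => (x i : ℂ)) ≠ 0 :=
      fun h => hx (funext fun i => by simpa using congrFun h i)
    simpa [star_dotProduct_map_ofReal_mulVec_map_ofReal, Complex.zero_lt_real] using hpos hxc
  · intro hpos v hv
    have hre : (fun i => (v i).re) ≠ 0 ∨ (fun i => (v i).im) ≠ 0 := by
      by_contra! h
      exact hv (funext fun i => Complex.ext (congrFun h.1 i) (congrFun h.2 i))
    have hnonneg (x : ι → ℝ) : 0 ≤ x ⬝ᵥ P *ᵥ x := by
      rcases eq_or_ne x 0 with rfl | hx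
      · simp
      · exact (hpos hx).le
    refine Complex.pos_iff.mpr ⟨?_, ?_⟩
    · rw [re_star_dotProduct_map_ofReal_mulVec]
      rcases hre with h | h
      · linarith [hpos h, hnonneg fun i => (v i).im]
      · linarith [hpos h, hnonneg fun i => (v i).re]
    · exact ((isHermitian_map_ofReal_iff.mpr hP).im_star_dotProduct_mulVec_self v).symm

end Complexification

section Inverse

variable {ι : Type*} [Fintype ι] [DecidableEq ι]

theorem isUnit_of_conjTranspose_mul_sub_eq_smul {K : Type*} [Field K] [StarRing K]
    [PartialOrder K] {M N P : Matrix ι ι K} {c : K} (h : Mᴴ * N - Nᴴ * M = c • P) (hc : c ≠ 0)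
    (hP : P.PosDef) : IsUnit M := by
  rw [isUnit_iff_isUnit_det, isUnit_iff_ne_zero]
  intro hdet
  obtain ⟨v, hv, hMv⟩ := exists_mulVec_eq_zero_iff.mpr hdet
  have hform : star v ⬝ᵥ ((Mᴴ * N - Nᴴ * M) *ᵥ v) = 0 := by
    rw [sub_mulVec, dotProduct_sub, ← mulVec_mulVec, ← mulVec_mulVec, hMv, mulVec_zero,
      dotProduct_zero, dotProduct_mulVec, ← star_mulVec, hMv, star_zero, zero_dotProduct,
      sub_zero]
  rw [h, smul_mulVec, dotProduct_smul, smul_eq_mul, mul_eq_zero] at hform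
  exact (hP.dotProduct_mulVec_pos hv).ne' (hform.resolve_left hc)

variable {R : Type*} [CommRing R] {M N : Matrix ι ι R}

theorem isSymm_mul_inv_of_transpose_mul_eq (hM : IsUnit M) (h : Mᵀ * N = Nᵀ * M) :
    (N * M⁻¹).IsSymm := by
  have hMt : IsUnit Mᵀ := (isUnit_transpose M).mpr hM
  calc (N * M⁻¹)ᵀ = (Mᵀ)⁻¹ * (Nᵀ * M) * M⁻¹ := by
        rw [transpose_mul, transpose_nonsing_inv, Matrix.mul_assoc, Matrix.mul_assoc,
          mul_nonsing_inv _ ((isUnit_iff_isUnit_det M).mp hM), Matrix.mul_one]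
    _ = N * M⁻¹ := by
        rw [← h, ← Matrix.mul_assoc, nonsing_inv_mul _ ((isUnit_iff_isUnit_det _).mp hMt),
          Matrix.one_mul]

theorem mul_inv_sub_conjTranspose [StarRing R] (hM : IsUnit M) :
    N * M⁻¹ - (N * M⁻¹)ᴴ = (M⁻¹)ᴴ * (Mᴴ * N - Nᴴ * M) * M⁻¹ := by
  have hMM : M * M⁻¹ = 1 := mul_nonsing_inv _ ((isUnit_iff_isUnit_det M).mp hM)
  have hMM' : (M⁻¹)ᴴ * Mᴴ = 1 := by rw [← conjTranspose_mul, hMM, conjTranspose_one]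
  calc N * M⁻¹ - (N * M⁻¹)ᴴ = ((M⁻¹)ᴴ * Mᴴ) * (N * M⁻¹) - (M⁻¹)ᴴ * Nᴴ * (M * M⁻¹) := by
        rw [hMM, hMM', Matrix.one_mul, Matrix.mul_one, conjTranspose_mul]
    _ = (M⁻¹)ᴴ * (Mᴴ * N - Nᴴ * M) * M⁻¹ := by noncomm_ring

end Inverse

end Matrix

theorem isUnit_and_inSiegel_mul_inv {n : ℕ} {M N : Matrix (Fin n) (Fin n) ℂ}
    {Y : Matrix (Fin n) (Fin n) ℝ} (hsymm : Mᵀ * N = Nᵀ * M)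
    (hherm : Mᴴ * N - Nᴴ * M = (2 * Complex.I) • Y.map (fun x => (x : ℂ))) (hY : Y.PosDef) :
    IsUnit M ∧ InSiegel n (N * M⁻¹) := by
  have h2I : (2 * Complex.I) ≠ 0 := by simp
  have hYc := posDef_map_ofReal_iff.mpr hY
  have hM := isUnit_of_conjTranspose_mul_sub_eq_smul hherm h2I hYc
  have hZ' := isSymm_mul_inv_of_transpose_mul_eq hM hsymm
  have him : ((N * M⁻¹).map Complex.im).map (fun x => (x : ℂ)) =
      (M⁻¹)ᴴ * Y.map (fun x => (x : ℂ)) * M⁻¹ := by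
    rw [← smul_right_inj h2I, ← sub_conjTranspose_of_isSymm hZ', mul_inv_sub_conjTranspose hM,
      hherm, Matrix.mul_smul, Matrix.smul_mul]
  refine ⟨hM, hZ', posDef_map_ofReal_iff.mp ?_⟩
  rw [him]
  exact hYc.conjTranspose_mul_mul_same
    (mulVec_injective_of_isUnit (isUnit_nonsing_inv_iff.mpr hM))

/-- `Sp(2n,ℝ)` acts on the Siegel upper half-space by Möbius transformations:
if `T = [[A,B],[C,D]]` is symplectic and `Z ∈ 𝔥ₙ`, then `A + BZ` is invertible and
`Z' = (C + DZ)(A + BZ)⁻¹ ∈ 𝔥ₙ`. -/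
theorem stmt9 (n : ℕ) (A B C D : Matrix (Fin n) (Fin n) ℝ)
    (hT : (Matrix.fromBlocks A B C D)ᵀ * Omega n * Matrix.fromBlocks A B C D = Omega n)
    (Z : Matrix (Fin n) (Fin n) ℂ) (hZ : InSiegel n Z) :
    IsUnit (A.map (fun x => (x : ℂ)) + B.map (fun x => (x : ℂ)) * Z) ∧
    InSiegel n ((C.map (fun x => (x : ℂ)) + D.map (fun x => (x : ℂ)) * Z) *
      (A.map (fun x => (x : ℂ)) + B.map (fun x => (x : ℂ)) * Z)⁻¹) := by
  obtain ⟨hZsymm, hY⟩ := hZ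
  have hS := (isSymplecticBlocks_of_transpose_mul_Omega_mul hT).map Complex.ofRealHom
  refine isUnit_and_inSiegel_mul_inv ?_ ?_ hY
  · have := hS.moebius_transpose_mul_sub Z Z
    rwa [hZsymm.eq, sub_self, sub_eq_zero] at this
  · rw [conjTranspose_map_ofReal_add_mul, conjTranspose_map_ofReal_add_mul,
      ← sub_conjTranspose_of_isSymm hZsymm]
    have := hS.moebius_transpose_mul_sub Zᴴᵀ Z
    rwa [transpose_transpose] at this
end

section
/- Let K = diag(k₁,…,k_n) with all k_i > 1/2, V = diag(K,K), and Σ̇ = [[M,−N],[N,M]] + [[A,B],[B,−A]] with M symmetric, N antisymmetric, A, B symmetric. Then 2·Tr[Σ̇ · M_V^{-1}(Σ̇)] = 4·Σ_{ij} (M_{ij}² + N_{ij}²)/(4k_i k_j − 1) + 4·Σ_{ij} (A_{ij}² + B_{ij}²)/(4k_i k_j + 1), where M_V(X) = 4VXV + ΩXΩ and M_V^{-1} is its inverse on symmetric matrices. -/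
open Matrix

/-- Williamson-frame QFI formula: for `V = diag(K,K)` with all `kᵢ > 1/2` and
`Σ̇ = [[M,−N],[N,M]] + [[A,B],[B,−A]]`, if `T = M_V⁻¹(Σ̇)` (i.e. `M_V(T) = Σ̇` with
`M_V(X) = 4VXV + ΩXΩ`), then
`2 Tr[Σ̇ T] = 4 Σᵢⱼ (Mᵢⱼ² + Nᵢⱼ²)/(4kᵢkⱼ−1) + 4 Σᵢⱼ (Aᵢⱼ² + Bᵢⱼ²)/(4kᵢkⱼ+1)`. -/
theorem stmt12 (n : ℕ) (k : Fin n → ℝ) (hk : ∀ i, 1 / 2 < k i)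
    (M N A B : Matrix (Fin n) (Fin n) ℝ)
    (hM : M.IsSymm) (hN : Nᵀ = -N) (hA : A.IsSymm) (hB : B.IsSymm) :
    let K : Matrix (Fin n) (Fin n) ℝ := Matrix.diagonal k
    let V : Matrix (Fin n ⊕ Fin n) (Fin n ⊕ Fin n) ℝ := Matrix.fromBlocks K 0 0 K
    let Sdot : Matrix (Fin n ⊕ Fin n) (Fin n ⊕ Fin n) ℝ :=
      Matrix.fromBlocks M (-N) N M + Matrix.fromBlocks A B B (-A)
    ∀ T : Matrix (Fin n ⊕ Fin n) (Fin n ⊕ Fin n) ℝ,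
      (4 : ℝ) • (V * T * V) + Omega n * T * Omega n = Sdot →
      2 * Matrix.trace (Sdot * T) =
        4 * ∑ i, ∑ j, (M i j ^ 2 + N i j ^ 2) / (4 * k i * k j - 1) +
        4 * ∑ i, ∑ j, (A i j ^ 2 + B i j ^ 2) / (4 * k i * k j + 1) := by
  intro K V Sdot T hT
  set P := T.toBlocks₁₁ with hP
  set Q := T.toBlocks₁₂ with hQ
  set R := T.toBlocks₂₁ with hR
  set S := T.toBlocks₂₂ with hS
  have hTb : T = fromBlocks P Q R S := (fromBlocks_toBlocks T).symm
  have hSd : Sdot = fromBlocks (M + A) (-N + B) (N + B) (M + -A) := by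
    show Matrix.fromBlocks M (-N) N M + Matrix.fromBlocks A B B (-A) = _
    rw [fromBlocks_add]
  rw [hTb, hSd] at hT
  have hV : V = fromBlocks K 0 0 K := rfl
  rw [hV, show Omega n = fromBlocks (0 : Matrix (Fin n) (Fin n) ℝ) 1 (-1) 0 from rfl]
    at hT
  simp only [fromBlocks_multiply, fromBlocks_smul, fromBlocks_add, Matrix.zero_mul,
    Matrix.mul_zero, Matrix.one_mul, Matrix.mul_one, Matrix.neg_mul, Matrix.mul_neg,
    zero_add, add_zero, neg_zero, neg_neg] at hT
  rw [fromBlocks_inj] at hT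
  obtain ⟨e11, e12, e21, e22⟩ := hT
  -- entrywise equations
  have f11 : ∀ i j, 4 * (k i * P i j * k j) + -(S i j) = M i j + A i j := by
    intro i j
    have := congrFun (congrFun e11 i) j
    simpa [Matrix.smul_apply, Matrix.add_apply, Matrix.neg_apply, smul_eq_mul,
      Matrix.mul_diagonal, Matrix.diagonal_mul, K] using this
  have f12 : ∀ i j, 4 * (k i * Q i j * k j) + R i j = -(N i j) + B i j := by
    intro i j
    have := congrFun (congrFun e12 i) j
    simpa [Matrix.smul_apply, Matrix.add_apply, Matrix.neg_apply, smul_eq_mul,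
      Matrix.mul_diagonal, Matrix.diagonal_mul, K] using this
  have f21 : ∀ i j, 4 * (k i * R i j * k j) + Q i j = N i j + B i j := by
    intro i j
    have := congrFun (congrFun e21 i) j
    simpa [Matrix.smul_apply, Matrix.add_apply, Matrix.neg_apply, smul_eq_mul,
      Matrix.mul_diagonal, Matrix.diagonal_mul, K] using this
  have f22 : ∀ i j, 4 * (k i * S i j * k j) + -(P i j) = M i j + -(A i j) := by
    intro i j
    have := congrFun (congrFun e22 i) j
    simpa [Matrix.smul_apply, Matrix.add_apply, Matrix.neg_apply, smul_eq_mul,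
      Matrix.mul_diagonal, Matrix.diagonal_mul, K] using this
  -- trace as a double sum
  have htr : Matrix.trace (Sdot * T) =
      ∑ i, ∑ j, ((M i j + A i j) * P j i + (-(N i j) + B i j) * R j i
        + (N i j + B i j) * Q j i + (M i j + -(A i j)) * S j i) := by
    rw [hTb, hSd]
    rw [fromBlocks_multiply]
    simp only [Matrix.trace, Matrix.diag, Fintype.sum_sum_type, fromBlocks_apply₁₁,
      fromBlocks_apply₂₂, Matrix.add_apply, Matrix.neg_apply, Matrix.mul_apply]
    rw [← Finset.sum_add_distrib]
    refine Finset.sum_congr rfl fun i _ => ?_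
    rw [← Finset.sum_add_distrib, ← Finset.sum_add_distrib, ← Finset.sum_add_distrib]
    refine Finset.sum_congr rfl fun j _ => ?_
    ring
  rw [htr]
  simp only [Finset.mul_sum]
  rw [← Finset.sum_add_distrib]
  refine Finset.sum_congr rfl fun i _ => ?_
  rw [← Finset.sum_add_distrib]
  refine Finset.sum_congr rfl fun j _ => ?_
  -- scalar identity per pair (i, j)
  have hMs : M j i = M i j := by
    have := congrFun (congrFun hM j) i; simpa [Matrix.transpose_apply] using this.symm
  have hAs : A j i = A i j := by
    have := congrFun (congrFun hA j) i; simpa [Matrix.transpose_apply] using this.symm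
  have hBs : B j i = B i j := by
    have := congrFun (congrFun hB j) i; simpa [Matrix.transpose_apply] using this.symm
  have hNs : N j i = -N i j := by
    have := congrFun (congrFun hN i) j
    simpa [Matrix.transpose_apply] using this
  have h1 := f11 j i; have h2 := f12 j i; have h3 := f21 j i; have h4 := f22 j i
  simp only [hMs, hAs, hBs, hNs] at h1 h2 h3 h4
  have hd : (4 * k i * k j - 1) ≠ 0 := by
    have hi := hk i; have hj := hk j; nlinarith
  have he : (4 * k i * k j + 1) ≠ 0 := by
    have hi := hk i; have hj := hk j; nlinarith
  set p := P j i; set q := Q j i; set r := R j i; set s := S j i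
  have hps : (4 * k i * k j - 1) * (p + s) = 2 * M i j := by linear_combination h1 + h4
  have hpms : (4 * k i * k j + 1) * (p - s) = 2 * A i j := by linear_combination h1 - h4
  have hqr : (4 * k i * k j + 1) * (q + r) = 2 * B i j := by linear_combination h2 + h3
  have hqmr : (4 * k i * k j - 1) * (q - r) = 2 * N i j := by linear_combination h2 - h3
  field_simp
  linear_combination (2 * M i j * (4 * k i * k j + 1)) * hps +
    (2 * A i j * (4 * k i * k j - 1)) * hpms + (2 * B i j * (4 * k i * k j - 1)) * hqr +
    (2 * N i j * (4 * k i * k j + 1)) * hqmr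
end

section
/- Let O be orthogonal symplectic and V, W symmetric 2n×2n matrices. Then Tr[P₊(OᵀVO) · M_{OᵀWO}^{-1}(P₊(OᵀVO))] = Tr[P₊(V) · M_W^{-1}(P₊(V))], where P₊(X) = (X + ΩXΩᵀ)/2, M_W(X) = 4WXW + ΩXΩ, assuming M_W is invertible on symmetric matrices. (Frame invariance of the even QFI under orthogonal symplectic frame changes.) -/
open Matrix

/-- Even projection `P₊(X) = (X + Ω X Ωᵀ)/2`. -/
noncomputable def Pplus (n : ℕ) (X : Matrix (Fin n ⊕ Fin n) (Fin n ⊕ Fin n) ℝ) :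
    Matrix (Fin n ⊕ Fin n) (Fin n ⊕ Fin n) ℝ :=
  (1 / 2 : ℝ) • (X + Omega n * X * (Omega n)ᵀ)

/-- Bures superoperator `M_W(X) = 4WXW + ΩXΩ`. -/
def Msuper (n : ℕ) (W X : Matrix (Fin n ⊕ Fin n) (Fin n ⊕ Fin n) ℝ) :
    Matrix (Fin n ⊕ Fin n) (Fin n ⊕ Fin n) ℝ :=
  (4 : ℝ) • (W * X * W) + Omega n * X * Omega n

lemma Pplus_isSymm (n : ℕ) (X : Matrix (Fin n ⊕ Fin n) (Fin n ⊕ Fin n) ℝ)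
    (hX : X.IsSymm) : (Pplus n X).IsSymm := by
  unfold Matrix.IsSymm
  simp [Pplus, Matrix.transpose_add, Matrix.transpose_mul, hX.eq, mul_assoc]

/-- Frame invariance of the even QFI under orthogonal symplectic frame changes:
if `O` is orthogonal symplectic, `M_W` is invertible on symmetric matrices, and
`T₁ = M_W⁻¹(P₊(V))`, `T₂ = M_{OᵀWO}⁻¹(P₊(OᵀVO))`, then
`Tr[P₊(OᵀVO) T₂] = Tr[P₊(V) T₁]`. -/
theorem stmt14 (n : ℕ) (O V W : Matrix (Fin n ⊕ Fin n) (Fin n ⊕ Fin n) ℝ)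
    (hSp : Oᵀ * Omega n * O = Omega n) (hO : Oᵀ * O = 1)
    (hV : V.IsSymm) (hW : W.IsSymm)
    (hInv : ∀ X : Matrix (Fin n ⊕ Fin n) (Fin n ⊕ Fin n) ℝ, X.IsSymm →
      ∃! T : Matrix (Fin n ⊕ Fin n) (Fin n ⊕ Fin n) ℝ, T.IsSymm ∧ Msuper n W T = X)
    (T₁ T₂ : Matrix (Fin n ⊕ Fin n) (Fin n ⊕ Fin n) ℝ)
    (hT₁ : T₁.IsSymm ∧ Msuper n W T₁ = Pplus n V)
    (hT₂ : T₂.IsSymm ∧ Msuper n (Oᵀ * W * O) T₂ = Pplus n (Oᵀ * V * O)) :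
    Matrix.trace (Pplus n (Oᵀ * V * O) * T₂) = Matrix.trace (Pplus n V * T₁) := by
  have hO' : O * Oᵀ = 1 := mul_eq_one_comm.mp hO
  -- O commutes with Ω
  have hcomm : O * Omega n = Omega n * O := by
    have h := congrArg (fun M => O * M) hSp
    simp only [← mul_assoc, hO', one_mul] at h
    exact h.symm
  have hcommT : Oᵀ * Omega n = Omega n * Oᵀ := by
    conv_rhs => rw [← hSp, mul_assoc, hO', mul_one]
  have hcommA : O * (Omega n)ᵀ = (Omega n)ᵀ * O := by
    have := congrArg Matrix.transpose hcommT
    simpa [Matrix.transpose_mul] using this.symm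
  have hcommAT : Oᵀ * (Omega n)ᵀ = (Omega n)ᵀ * Oᵀ := by
    have := congrArg Matrix.transpose hcomm
    simpa [Matrix.transpose_mul] using this.symm
  -- normal-form rewriting rules (right-associated, push O's to the right)
  have cancel1 : ∀ Y, O * (Oᵀ * Y) = Y := by
    intro Y; rw [← mul_assoc, hO', one_mul]
  have cancel2 : ∀ Y, Oᵀ * (O * Y) = Y := by
    intro Y; rw [← mul_assoc, hO, one_mul]
  have swap1 : ∀ Y, O * (Omega n * Y) = Omega n * (O * Y) := by
    intro Y; rw [← mul_assoc, hcomm, mul_assoc]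
  have swap2 : ∀ Y, Oᵀ * (Omega n * Y) = Omega n * (Oᵀ * Y) := by
    intro Y; rw [← mul_assoc, hcommT, mul_assoc]
  have swapA1 : ∀ Y, O * ((Omega n)ᵀ * Y) = (Omega n)ᵀ * (O * Y) := by
    intro Y; rw [← mul_assoc, hcommA, mul_assoc]
  have swapA2 : ∀ Y, Oᵀ * ((Omega n)ᵀ * Y) = (Omega n)ᵀ * (Oᵀ * Y) := by
    intro Y; rw [← mul_assoc, hcommAT, mul_assoc]
  -- P₊ conjugation
  have hP : Pplus n (Oᵀ * V * O) = Oᵀ * Pplus n V * O := by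
    simp only [Pplus, Matrix.mul_smul, Matrix.smul_mul, Matrix.mul_add, Matrix.add_mul,
      mul_assoc, swap1, swap2, swapA1, swapA2, cancel1, cancel2, hcomm, hcommT,
      hcommA, hcommAT]
  set S := O * T₂ * Oᵀ with hS
  have hT₂S : T₂ = Oᵀ * S * O := by
    rw [hS, ← mul_assoc, ← mul_assoc, hO, one_mul, mul_assoc, hO, mul_one]
  have hSsymm : S.IsSymm := by
    unfold Matrix.IsSymm
    simp [hS, Matrix.transpose_mul, hT₂.1.eq, mul_assoc]
  -- M conjugation
  have hM : Msuper n (Oᵀ * W * O) T₂ = Oᵀ * Msuper n W S * O := by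
    rw [hT₂S]
    simp only [Msuper, Matrix.mul_smul, Matrix.smul_mul, Matrix.mul_add, Matrix.add_mul,
      mul_assoc, swap1, swap2, swapA1, swapA2, cancel1, cancel2, hcomm, hcommT,
      hcommA, hcommAT]
  -- conclude M_W S = P₊ V
  have hMS : Msuper n W S = Pplus n V := by
    have h1 : Oᵀ * (Msuper n W S * O) = Oᵀ * (Pplus n V * O) := by
      have := hT₂.2
      rw [hM, hP] at this
      simpa [mul_assoc] using this
    have h2 := congrArg (fun M => O * M * Oᵀ) h1
    simp only [cancel1] at h2
    calc Msuper n W S = Msuper n W S * (O * Oᵀ) := by rw [hO', mul_one]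
      _ = Pplus n V * (O * Oᵀ) := by rw [← mul_assoc, h2, mul_assoc]
      _ = Pplus n V := by rw [hO', mul_one]
  obtain ⟨T, _, hTuniq⟩ := hInv (Pplus n V) (Pplus_isSymm n V hV)
  have hST₁ : S = T₁ := by
    rw [hTuniq S ⟨hSsymm, hMS⟩, hTuniq T₁ hT₁]
  calc Matrix.trace (Pplus n (Oᵀ * V * O) * T₂)
      = Matrix.trace (Oᵀ * (Pplus n V * (O * T₂))) := by
        rw [hP]; simp only [mul_assoc]
    _ = Matrix.trace (Pplus n V * (O * T₂) * Oᵀ) := by rw [Matrix.trace_mul_comm]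
    _ = Matrix.trace (Pplus n V * S) := by rw [hS]; simp only [mul_assoc]
    _ = Matrix.trace (Pplus n V * T₁) := by rw [hST₁]
end

section
/- Let Z(t) = i·[[e^{2r}cos²(t/2)+e^{-2r}sin²(t/2), sin(t)·sinh(2r)],[sin(t)·sinh(2r), e^{-2r}cos²(t/2)+e^{2r}sin²(t/2)]], a purely imaginary 2×2 complex symmetric matrix with Y(t) = Im Z(t). Then (1/2)·Tr[Y(t)^{-1} (dZ/dt) Y(t)^{-1} (dZ/dt)*] = sinh²(2r) for all t. -/
open Matrix

private lemma sin_half (t : ℝ) : Real.sin t = 2 * Real.sin (t/2) * Real.cos (t/2) := by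
  have := Real.sin_two_mul (t/2); rw [show 2*(t/2) = t by ring] at this; linarith

private lemma hdA (r t : ℝ) :
    HasDerivAt (fun s => Real.exp (2*r) * Real.cos (s/2)^2 + Real.exp (-(2*r)) * Real.sin (s/2)^2)
      (-(Real.sin t * Real.sinh (2*r))) t := by
  have h1 : HasDerivAt (fun s : ℝ => s/2) (1/2) t := (hasDerivAt_id t).div_const 2
  have hc : HasDerivAt (fun s : ℝ => Real.cos (s/2)) (-Real.sin (t/2) * (1/2)) t :=
    by have := (Real.hasDerivAt_cos (t/2)).comp t h1; exact this
  have hs : HasDerivAt (fun s : ℝ => Real.sin (s/2)) (Real.cos (t/2) * (1/2)) t :=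
    by have := (Real.hasDerivAt_sin (t/2)).comp t h1; exact this
  have h := ((hc.pow 2).const_mul (Real.exp (2*r))).add ((hs.pow 2).const_mul (Real.exp (-(2*r))))
  refine h.congr_deriv ?_
  rw [sin_half t, Real.sinh_eq]; ring

private lemma hdD (r t : ℝ) :
    HasDerivAt (fun s => Real.exp (-(2*r)) * Real.cos (s/2)^2 + Real.exp (2*r) * Real.sin (s/2)^2)
      (Real.sin t * Real.sinh (2*r)) t := by
  have h1 : HasDerivAt (fun s : ℝ => s/2) (1/2) t := (hasDerivAt_id t).div_const 2
  have hc : HasDerivAt (fun s : ℝ => Real.cos (s/2)) (-Real.sin (t/2) * (1/2)) t :=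
    by have := (Real.hasDerivAt_cos (t/2)).comp t h1; exact this
  have hs : HasDerivAt (fun s : ℝ => Real.sin (s/2)) (Real.cos (t/2) * (1/2)) t :=
    by have := (Real.hasDerivAt_sin (t/2)).comp t h1; exact this
  have h := ((hc.pow 2).const_mul (Real.exp (-(2*r)))).add ((hs.pow 2).const_mul (Real.exp (2*r)))
  refine h.congr_deriv ?_
  rw [sin_half t, Real.sinh_eq]; ring

private lemma hdB (r t : ℝ) :
    HasDerivAt (fun s => Real.sin s * Real.sinh (2*r)) (Real.cos t * Real.sinh (2*r)) t :=
  (Real.hasDerivAt_sin t).mul_const _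

set_option maxHeartbeats 1000000 in
/-- QFI for beam-splitter-angle sensing via graphical calculus: with
`Z(t) = i[[e^{2r}cos²(t/2)+e^{−2r}sin²(t/2), sin t sinh 2r],
          [sin t sinh 2r, e^{−2r}cos²(t/2)+e^{2r}sin²(t/2)]]`,
`Y(t) = Im Z(t)` and `dZ` the entrywise derivative of `Z` at `t`,
`(1/2) Tr[Y⁻¹ dZ Y⁻¹ dZ*] = sinh²(2r)` for all `t`. -/
theorem stmt18 (r : ℝ) :
    ∀ t : ℝ,
    let Z : ℝ → Matrix (Fin 2) (Fin 2) ℂ := fun s =>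
      Complex.I •
        !![((Real.exp (2 * r) * Real.cos (s / 2) ^ 2 +
              Real.exp (-(2 * r)) * Real.sin (s / 2) ^ 2 : ℝ) : ℂ),
            ((Real.sin s * Real.sinh (2 * r) : ℝ) : ℂ);
          ((Real.sin s * Real.sinh (2 * r) : ℝ) : ℂ),
            ((Real.exp (-(2 * r)) * Real.cos (s / 2) ^ 2 +
              Real.exp (2 * r) * Real.sin (s / 2) ^ 2 : ℝ) : ℂ)]
    let Y : Matrix (Fin 2) (Fin 2) ℝ := Matrix.of fun i j => (Z t i j).im
    let dZ : Matrix (Fin 2) (Fin 2) ℂ := Matrix.of fun i j => deriv (fun s => Z s i j) t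
    let Yc : Matrix (Fin 2) (Fin 2) ℂ := (Y⁻¹).map (fun x => (x : ℂ))
    (1 / 2 : ℂ) * Matrix.trace (Yc * dZ * Yc * dZ.map (starRingEnd ℂ)) =
      ((Real.sinh (2 * r) ^ 2 : ℝ) : ℂ) := by
  intro t Z Y dZ Yc
  have hsin : Real.sin t = 2 * Real.sin (t/2) * Real.cos (t/2) := sin_half t
  have hcos : Real.cos t = Real.cos (t/2)^2 - Real.sin (t/2)^2 := by
    have h2 := Real.cos_two_mul (t/2)
    rw [show 2*(t/2) = t by ring] at h2
    have h := Real.sin_sq_add_cos_sq (t/2); linarith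
  have hpy : Real.sin (t/2)^2 + Real.cos (t/2)^2 = 1 := Real.sin_sq_add_cos_sq _
  have hEF : Real.exp (2*r) * Real.exp (-(2*r)) = 1 := by rw [← Real.exp_add]; simp
  have hsh : Real.sinh (2*r) = (Real.exp (2*r) - Real.exp (-(2*r))) / 2 := Real.sinh_eq _
  have hY : Y = !![Real.exp (2*r) * Real.cos (t/2)^2 + Real.exp (-(2*r)) * Real.sin (t/2)^2,
      Real.sin t * Real.sinh (2*r);
      Real.sin t * Real.sinh (2*r),
      Real.exp (-(2*r)) * Real.cos (t/2)^2 + Real.exp (2*r) * Real.sin (t/2)^2] := by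
    ext i j
    fin_cases i <;> fin_cases j <;>
      simp only [Y, Z, Matrix.smul_apply, Matrix.of_apply, Matrix.cons_val', Matrix.cons_val_zero,
        Matrix.cons_val_one, Matrix.head_cons, Matrix.empty_val', Matrix.cons_val_fin_one,
        Matrix.head_fin_const, Fin.zero_eta, Fin.mk_one, smul_eq_mul, Complex.mul_im,
        Complex.I_re, Complex.I_im, Complex.ofReal_re, Complex.ofReal_im] <;> ring
  have hdet : (Real.exp (2*r) * Real.cos (t/2)^2 + Real.exp (-(2*r)) * Real.sin (t/2)^2) *
      (Real.exp (-(2*r)) * Real.cos (t/2)^2 + Real.exp (2*r) * Real.sin (t/2)^2) -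
      (Real.sin t * Real.sinh (2*r)) * (Real.sin t * Real.sinh (2*r)) = 1 := by
    rw [hsin, hsh]
    linear_combination (Real.sin (t/2)^2 + Real.cos (t/2)^2)^2 * hEF +
      (Real.sin (t/2)^2 + Real.cos (t/2)^2 + 1) * hpy
  have hYinv : Y⁻¹ = !![Real.exp (-(2*r)) * Real.cos (t/2)^2 + Real.exp (2*r) * Real.sin (t/2)^2,
      -(Real.sin t * Real.sinh (2*r));
      -(Real.sin t * Real.sinh (2*r)),
      Real.exp (2*r) * Real.cos (t/2)^2 + Real.exp (-(2*r)) * Real.sin (t/2)^2] := by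
    apply inv_eq_right_inv
    rw [hY]
    ext i j
    fin_cases i <;> fin_cases j <;>
      simp [Matrix.mul_apply, Fin.sum_univ_two, Matrix.one_apply] <;> nlinarith [hdet]
  have e00 : dZ 0 0 = Complex.I * ((-(Real.sin t * Real.sinh (2*r)) : ℝ) : ℂ) := by
    show deriv (fun s => Z s 0 0) t = _
    have h : (fun s => Z s 0 0) = fun s =>
        Complex.I * (((Real.exp (2*r) * Real.cos (s/2)^2 + Real.exp (-(2*r)) * Real.sin (s/2)^2 : ℝ)) : ℂ) := by
      funext s; simp [Z]
    rw [h]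
    exact (((hdA r t).ofReal_comp).const_mul Complex.I).deriv
  have e01 : dZ 0 1 = Complex.I * ((Real.cos t * Real.sinh (2*r) : ℝ) : ℂ) := by
    show deriv (fun s => Z s 0 1) t = _
    have h : (fun s => Z s 0 1) = fun s =>
        Complex.I * ((Real.sin s * Real.sinh (2*r) : ℝ) : ℂ) := by
      funext s; simp [Z]
    rw [h]
    exact (((hdB r t).ofReal_comp).const_mul Complex.I).deriv
  have e10 : dZ 1 0 = Complex.I * ((Real.cos t * Real.sinh (2*r) : ℝ) : ℂ) := by
    show deriv (fun s => Z s 1 0) t = _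
    have h : (fun s => Z s 1 0) = fun s =>
        Complex.I * ((Real.sin s * Real.sinh (2*r) : ℝ) : ℂ) := by
      funext s; simp [Z]
    rw [h]
    exact (((hdB r t).ofReal_comp).const_mul Complex.I).deriv
  have e11 : dZ 1 1 = Complex.I * ((Real.sin t * Real.sinh (2*r) : ℝ) : ℂ) := by
    show deriv (fun s => Z s 1 1) t = _
    have h : (fun s => Z s 1 1) = fun s =>
        Complex.I * (((Real.exp (-(2*r)) * Real.cos (s/2)^2 + Real.exp (2*r) * Real.sin (s/2)^2 : ℝ)) : ℂ) := by
      funext s; simp [Z]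
    rw [h]
    exact (((hdD r t).ofReal_comp).const_mul Complex.I).deriv
  have hYc : Yc = !![((Real.exp (-(2*r)) * Real.cos (t/2)^2 + Real.exp (2*r) * Real.sin (t/2)^2 : ℝ) : ℂ),
      ((-(Real.sin t * Real.sinh (2*r)) : ℝ) : ℂ);
      ((-(Real.sin t * Real.sinh (2*r)) : ℝ) : ℂ),
      ((Real.exp (2*r) * Real.cos (t/2)^2 + Real.exp (-(2*r)) * Real.sin (t/2)^2 : ℝ) : ℂ)] := by
    ext i j
    fin_cases i <;> fin_cases j <;> simp [Yc, hYinv]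
  simp only [Matrix.trace, Matrix.diag, Matrix.mul_apply, Fin.sum_univ_two,
    Matrix.map_apply, hYc, e00, e01, e10, e11,
    Matrix.cons_val', Matrix.cons_val_zero, Matrix.cons_val_one, Matrix.head_cons,
    Matrix.head_fin_const, Matrix.empty_val', Matrix.cons_val_fin_one, _root_.map_mul,
    Complex.conj_I, Complex.conj_ofReal]
  simp only [Matrix.cons_val', Matrix.cons_val_zero, Matrix.cons_val_one, Matrix.head_cons,
    Matrix.head_fin_const, Matrix.empty_val', Matrix.cons_val_fin_one, Matrix.of_apply]
  rw [mul_comm, mul_one_div, div_eq_iff (two_ne_zero (α := ℂ))]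
  rw [Complex.ext_iff]
  constructor
  · simp only [Complex.add_re, Complex.add_im, Complex.mul_re, Complex.mul_im, Complex.neg_re,
      Complex.neg_im, Complex.ofReal_re, Complex.ofReal_im, Complex.I_re, Complex.I_im,
      Complex.re_ofNat, Complex.im_ofNat]
    rw [hsin, hcos, hsh]
    linear_combination (1 + -1*Real.cos (t/2)^8 + -4*Real.sin (t/2)^2*Real.cos (t/2)^6 + -6*Real.sin (t/2)^4*Real.cos (t/2)^4 + -4*Real.sin (t/2)^6*Real.cos (t/2)^2 + -1*Real.sin (t/2)^8 + (1/2)*Real.exp (-(2*r))^2*Real.cos (t/2)^8 + 2*Real.exp (-(2*r))^2*Real.sin (t/2)^2*Real.cos (t/2)^6 + 3*Real.exp (-(2*r))^2*Real.sin (t/2)^4*Real.cos (t/2)^4 + 2*Real.exp (-(2*r))^2*Real.sin (t/2)^6*Real.cos (t/2)^2 + (1/2)*Real.exp (-(2*r))^2*Real.sin (t/2)^8 + -1*Real.exp (2*r)*Real.exp (-(2*r))*Real.cos (t/2)^8 + -4*Real.exp (2*r)*Real.exp (-(2*r))*Real.sin (t/2)^2*Real.cos (t/2)^6 + -6*Real.exp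 (2*r)*Real.exp (-(2*r))*Real.sin (t/2)^4*Real.cos (t/2)^4 + -4*Real.exp (2*r)*Real.exp (-(2*r))*Real.sin (t/2)^6*Real.cos (t/2)^2 + -1*Real.exp (2*r)*Real.exp (-(2*r))*Real.sin (t/2)^8 + (1/2)*Real.exp (2*r)^2*Real.cos (t/2)^8 + 2*Real.exp (2*r)^2*Real.sin (t/2)^2*Real.cos (t/2)^6 + 3*Real.exp (2*r)^2*Real.sin (t/2)^4*Real.cos (t/2)^4 + 2*Real.exp (2*r)^2*Real.sin (t/2)^6*Real.cos (t/2)^2 + (1/2)*Real.exp (2*r)^2*Real.sin (t/2)^8) * hEF + (-1 + -1*Real.cos (t/2)^2 + -1*Real.cos (t/2)^4 + -1*Real.cos (t/2)^6 + -1*Real.sin (t/2)^2 + -2*Real.sin (t/2)^2*Real.cos (t/2)^2 + -3*Real.sin (t/2)^2*Real.cos (t/2)^4 + -1*Real.sin (t/2)^4 + -3*Real.sin (t/2)^4*Real.cos (t/2)^2 + -1*Real.sin (t/2)^6 + (1/2)*Real.exp (-(2*r))^2 + (1/2)*Real.exp (-(2*r))^2*Real.cos (t/2)^2 + (1/2)*Real.exp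 (-(2*r))^2*Real.cos (t/2)^4 + (1/2)*Real.exp (-(2*r))^2*Real.cos (t/2)^6 + (1/2)*Real.exp (-(2*r))^2*Real.sin (t/2)^2 + Real.exp (-(2*r))^2*Real.sin (t/2)^2*Real.cos (t/2)^2 + (3/2)*Real.exp (-(2*r))^2*Real.sin (t/2)^2*Real.cos (t/2)^4 + (1/2)*Real.exp (-(2*r))^2*Real.sin (t/2)^4 + (3/2)*Real.exp (-(2*r))^2*Real.sin (t/2)^4*Real.cos (t/2)^2 + (1/2)*Real.exp (-(2*r))^2*Real.sin (t/2)^6 + (1/2)*Real.exp (2*r)^2 + (1/2)*Real.exp (2*r)^2*Real.cos (t/2)^2 + (1/2)*Real.exp (2*r)^2*Real.cos (t/2)^4 + (1/2)*Real.exp (2*r)^2*Real.cos (t/2)^6 + (1/2)*Real.exp (2*r)^2*Real.sin (t/2)^2 + Real.exp (2*r)^2*Real.sin (t/2)^2*Real.cos (t/2)^2 + (3/2)*Real.exp (2*r)^2*Real.sin (t/2)^2*Real.cos (t/2)^4 + (1/2)*Real.exp (2*r)^2*Real.sin (t/2)^4 + (3/2)*Real.exp (2*r)^2*Real.sin (t/2)^4*Real.cos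 (t/2)^2 + (1/2)*Real.exp (2*r)^2*Real.sin (t/2)^6) * hpy
  · simp only [Complex.add_re, Complex.add_im, Complex.mul_re, Complex.mul_im, Complex.neg_re,
      Complex.neg_im, Complex.ofReal_re, Complex.ofReal_im, Complex.I_re, Complex.I_im,
      Complex.re_ofNat, Complex.im_ofNat]
    ring
end
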